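/- With the Gauss-sequence model of an alternating knotoid diagram D with n ≥ 1 crossings (over- and under-passages strictly alternate along the linear order of positions): if a is a base point located immediately before an over-passage position, then d(D_a) = d(D) = min_b d(D_b). -/
import Mathlib


/-- The label of position `p` relative to base point `a`, i.e. the order in which position `p`
is encountered when traversing the `2*n` positions cyclically starting at base point `a`. -/
def relLabel (n : ℕ) (a : Fin (2 * n + 1)) (p : Fin (2 * n)) : ℕ :=
  (p.val + 2 * n - a.val) % (2 * n)

/-- The warping degree of the diagram with Gauss sequence `o, u` at base point `a`. -/
def warpingDegree (n : ℕ) (o u : Fin n → Fin (2 * n)) (a : Fin (2 * n + 1)) : ℕ :=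
  (Finset.univ.filter fun c => relLabel n a (u c) < relLabel n a (o c)).card

/-- The position `p ↦ 2n - 1 - p` of the reversed diagram. -/
def revPos (n : ℕ) (p : Fin (2 * n)) : Fin (2 * n) :=
  ⟨2 * n - 1 - p.val, by have := p.isLt; omega⟩

/-- The base point of the reversed diagram corresponding to base point `a`. -/
def revBase (n : ℕ) (a : Fin (2 * n + 1)) : Fin (2 * n + 1) :=
  ⟨2 * n - a.val, by have := a.isLt; omega⟩

/-- The cutting number of crossing `c` at base point `a`: `2α − β − γ` where `α` is the
relabeled position of the over-passage, `β` that of the under-passage and `γ = β + 1`. -/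
def cutNum (n : ℕ) (o u : Fin n → Fin (2 * n)) (a : Fin (2 * n + 1)) (c : Fin n) : ℤ :=
  2 * (relLabel n a (o c) : ℤ) - (relLabel n a (u c) : ℤ) - ((relLabel n a (u c) : ℤ) + 1)

/-- The diagram is alternating: along consecutive positions, over-passages and
under-passages strictly alternate. -/
def IsAlternating (n : ℕ) (o u : Fin n → Fin (2 * n)) : Prop :=
  ∀ p q : Fin (2 * n), p.val + 1 = q.val → ((∃ c, o c = p) ↔ (∃ c, u c = q))

lemma relLabel_eq (n : ℕ) (a : Fin (2 * n + 1)) (p : Fin (2 * n)) :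
    relLabel n a p = if a.val ≤ p.val then p.val - a.val else p.val + 2 * n - a.val := by
  have hp := p.isLt
  have ha := a.isLt
  unfold relLabel
  rcases le_or_gt a.val p.val with h | h
  · rw [if_pos h]
    have h2 : p.val + 2 * n - a.val = (p.val - a.val) + 2 * n := by omega
    rw [h2, Nat.add_mod_right, Nat.mod_eq_of_lt (by omega)]
  · rw [if_neg (by omega), Nat.mod_eq_of_lt (by omega)]

lemma relLabel_lt_top (n : ℕ) (a : Fin (2 * n + 1)) (p : Fin (2 * n)) :
    relLabel n a p < 2 * n := by
  have hp := p.isLt; have ha := a.isLt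
  rw [relLabel_eq]; split_ifs <;> omega

lemma relLabel_step (n : ℕ) (b : Fin (2 * n + 1)) (hb : b.val < 2 * n)
    (hb1 : b.val + 1 < 2 * n + 1) (p : Fin (2 * n)) (hp : p.val ≠ b.val) :
    relLabel n ⟨b.val + 1, hb1⟩ p + 1 = relLabel n b p := by
  have hpl := p.isLt
  rw [relLabel_eq, relLabel_eq]
  split_ifs <;> simp_all <;> omega

section Steps
variable (n : ℕ) (o u : Fin n → Fin (2 * n))
  (hval : Function.Injective (Sum.elim o u : Fin n ⊕ Fin n → Fin (2 * n)))

include hval in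
lemma ou_disjoint : ∀ c c', (o c).val ≠ (u c').val := by
  intro c c' h
  have h2 : (Sum.elim o u (Sum.inl c) : Fin (2 * n)) = Sum.elim o u (Sum.inr c') := by
    simpa [Fin.ext_iff] using h
  simpa using hval h2

include hval in
lemma ou_total : ∀ p : Fin (2 * n), (∃ c, (o c).val = p.val) ∨ (∃ c, (u c).val = p.val) := by
  have hbij : Function.Bijective (Sum.elim o u : Fin n ⊕ Fin n → Fin (2 * n)) :=
    (Fintype.bijective_iff_injective_and_card _).mpr ⟨hval, by simp [two_mul]⟩
  intro p
  obtain ⟨x, hx⟩ := hbij.2 p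
  cases x with
  | inl c => exact Or.inl ⟨c, by rw [show o c = p from hx]⟩
  | inr c => exact Or.inr ⟨c, by rw [show u c = p from hx]⟩

include hval in
lemma warp_step_over (b : Fin (2 * n + 1)) (hb : b.val < 2 * n)
    (c0 : Fin n) (hc0 : (o c0).val = b.val) :
    warpingDegree n o u ⟨b.val + 1, by omega⟩ = warpingDegree n o u b + 1 := by
  classical
  have hdis := ou_disjoint n o u hval
  have hinj : ∀ c, (o c).val = b.val → c = c0 := by
    intro c h
    have h2 : (Sum.elim o u (Sum.inl c) : Fin (2 * n)) = Sum.elim o u (Sum.inl c0) := by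
      simp only [Sum.elim_inl]; exact Fin.ext (h.trans hc0.symm)
    simpa using hval h2
  unfold warpingDegree
  have key : (Finset.univ.filter fun c =>
        relLabel n ⟨b.val + 1, by omega⟩ (u c) < relLabel n ⟨b.val + 1, by omega⟩ (o c))
      = insert c0 (Finset.univ.filter fun c => relLabel n b (u c) < relLabel n b (o c)) := by
    ext c
    simp only [Finset.mem_insert, Finset.mem_filter, Finset.mem_univ, true_and]
    by_cases hc : c = c0
    · subst hc
      refine iff_of_true ?_ (Or.inl rfl)
      have hu : (u c).val ≠ b.val := fun h => hdis c c (hc0.trans h.symm)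
      have h1 := relLabel_step n b hb (by omega) (u c) hu
      have h3 := relLabel_lt_top n b (u c)
      have h2 : relLabel n ⟨b.val + 1, by omega⟩ (o c) = 2 * n - 1 := by
        rw [relLabel_eq]; simp only [Fin.val_mk]; split_ifs <;> omega
      omega
    · have ho : (o c).val ≠ b.val := fun h => hc (hinj c h)
      have hu : (u c).val ≠ b.val := fun h => hdis c0 c (hc0.trans h.symm)
      have h1 := relLabel_step n b hb (by omega) (u c) hu
      have h2 := relLabel_step n b hb (by omega) (o c) ho
      simp only [hc, false_or]
      omega
  rw [key, Finset.card_insert_of_notMem]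
  simp only [Finset.mem_filter, Finset.mem_univ, true_and, not_lt]
  have h0 : relLabel n b (o c0) = 0 := by
    rw [relLabel_eq]; split_ifs <;> omega
  omega
end Steps

section More
variable (n : ℕ) (o u : Fin n → Fin (2 * n))
  (hval : Function.Injective (Sum.elim o u : Fin n ⊕ Fin n → Fin (2 * n)))

include hval in
lemma warp_step_under (b : Fin (2 * n + 1)) (hb : b.val < 2 * n)
    (c0 : Fin n) (hc0 : (u c0).val = b.val) :
    warpingDegree n o u b = warpingDegree n o u ⟨b.val + 1, by omega⟩ + 1 := by
  classical
  have hdis := ou_disjoint n o u hval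
  have hinj : ∀ c, (u c).val = b.val → c = c0 := by
    intro c h
    have h2 : (Sum.elim o u (Sum.inr c) : Fin (2 * n)) = Sum.elim o u (Sum.inr c0) := by
      simp only [Sum.elim_inr]; exact Fin.ext (h.trans hc0.symm)
    simpa using hval h2
  unfold warpingDegree
  have key : (Finset.univ.filter fun c => relLabel n b (u c) < relLabel n b (o c))
      = insert c0 (Finset.univ.filter fun c =>
          relLabel n ⟨b.val + 1, by omega⟩ (u c) < relLabel n ⟨b.val + 1, by omega⟩ (o c)) := by
    ext c
    simp only [Finset.mem_insert, Finset.mem_filter, Finset.mem_univ, true_and]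
    by_cases hc : c = c0
    · subst hc
      refine iff_of_true ?_ (Or.inl rfl)
      have ho : (o c).val ≠ b.val := fun h => hdis c c (h.trans hc0.symm)
      have h1 := relLabel_step n b hb (by omega) (o c) ho
      have h0 : relLabel n b (u c) = 0 := by
        rw [relLabel_eq]; split_ifs <;> omega
      omega
    · have ho : (o c).val ≠ b.val := fun h => hdis c c0 (h.trans hc0.symm)
      have hu : (u c).val ≠ b.val := fun h => hc (hinj c h)
      have h1 := relLabel_step n b hb (by omega) (u c) hu
      have h2 := relLabel_step n b hb (by omega) (o c) ho
      simp only [hc, false_or]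
      omega
  rw [key, Finset.card_insert_of_notMem]
  simp only [Finset.mem_filter, Finset.mem_univ, true_and, not_lt]
  have h1 : relLabel n ⟨b.val + 1, by omega⟩ (u c0) = 2 * n - 1 := by
    rw [relLabel_eq]; simp only [Fin.val_mk]; split_ifs <;> omega
  have h2 := relLabel_lt_top n ⟨b.val + 1, by omega⟩ (o c0)
  omega

lemma warp_wrap (hn : 1 ≤ n) :
    warpingDegree n o u ⟨2 * n, by omega⟩ = warpingDegree n o u ⟨0, by omega⟩ := by
  have h : ∀ p : Fin (2 * n), relLabel n ⟨2 * n, by omega⟩ p = relLabel n ⟨0, by omega⟩ p := by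
    intro p; have := p.isLt
    rw [relLabel_eq, relLabel_eq]; simp only [Fin.val_mk]; split_ifs <;> omega
  unfold warpingDegree
  congr 1
  apply Finset.filter_congr
  intro c _
  rw [h, h]

lemma warp_mod_succ (hn : 1 ≤ n) (m : ℕ) (hm : m < 2 * n) :
    warpingDegree n o u ⟨(m + 1) % (2 * n), Nat.lt_succ_of_lt (Nat.mod_lt _ (by omega))⟩
      = warpingDegree n o u ⟨m + 1, by omega⟩ := by
  rcases Nat.lt_or_ge (m + 1) (2 * n) with h | h
  · congr 1
    exact Fin.ext (by simp [Nat.mod_eq_of_lt h])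
  · have h2 : m + 1 = 2 * n := by omega
    rw [show (⟨(m + 1) % (2 * n), Nat.lt_succ_of_lt (Nat.mod_lt _ (by omega))⟩ :
          Fin (2 * n + 1)) = ⟨0, by omega⟩ from Fin.ext (by simp [h2]),
      show (⟨m + 1, by omega⟩ : Fin (2 * n + 1)) = ⟨2 * n, by omega⟩ from Fin.ext (by simp [h2])]
    exact (warp_wrap n o u hn).symm

include hval in
lemma over_parity (halt : IsAlternating n o u) :
    ∀ m, m < 2 * n → ((∃ c, (o c).val = m) ↔ (m % 2 = 0 ↔ ∃ c, (o c).val = 0)) := by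
  have hdis := ou_disjoint n o u hval
  have htot := ou_total n o u hval
  intro m
  induction m with
  | zero => intro h; simp
  | succ k ih =>
    intro hk
    have hk' : k < 2 * n := by omega
    have h1 : (∃ c, (o c).val = k) ↔ (∃ c, (u c).val = k + 1) := by
      have h := halt ⟨k, hk'⟩ ⟨k + 1, hk⟩ rfl
      simpa [Fin.ext_iff] using h
    have h2 : (∃ c, (u c).val = k + 1) ↔ ¬ (∃ c, (o c).val = k + 1) := by
      constructor
      · rintro ⟨c, hcu⟩ ⟨c', hc'⟩
        exact hdis c' c (hc'.trans hcu.symm)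
      · intro h
        rcases htot ⟨k + 1, hk⟩ with ⟨c, hcv⟩ | ⟨c, hcv⟩
        · exact absurd ⟨c, hcv⟩ h
        · exact ⟨c, hcv⟩
    have h4 : (∃ c, (o c).val = k + 1) ↔ ¬ (∃ c, (o c).val = k) := by
      rw [h1, h2]; tauto
    have h3 : (k + 1) % 2 = 0 ↔ ¬ (k % 2 = 0) := by omega
    rw [h4]
    rw [ih hk']
    by_cases hO : ∃ c, (o c).val = 0 <;> simp [hO] <;> omega
end More

section Chain
variable (n : ℕ) (o u : Fin n → Fin (2 * n))
  (hval : Function.Injective (Sum.elim o u : Fin n ⊕ Fin n → Fin (2 * n)))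

include hval in
lemma warp_chain (hn : 1 ≤ n) (halt : IsAlternating n o u)
    (a : Fin (2 * n + 1)) (c : Fin n) (hc : (o c).val = a.val) :
    ∀ k : ℕ, warpingDegree n o u
        ⟨(a.val + k) % (2 * n), Nat.lt_succ_of_lt (Nat.mod_lt _ (by omega))⟩
      = warpingDegree n o u a + k % 2 := by
  have ha : a.val < 2 * n := hc ▸ (o c).isLt
  have hpar := over_parity n o u hval halt
  have htot := ou_total n o u hval
  have hOa : a.val % 2 = 0 ↔ (∃ c', (o c').val = 0) := (hpar a.val ha).mp ⟨c, hc⟩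
  intro k
  induction k with
  | zero =>
    rw [show (⟨(a.val + 0) % (2 * n), Nat.lt_succ_of_lt (Nat.mod_lt _ (by omega))⟩ :
        Fin (2 * n + 1)) = a from Fin.ext (by simp [Nat.mod_eq_of_lt ha])]
    simp
  | succ k ih =>
    have hm2 : (a.val + k) % (2 * n) < 2 * n := Nat.mod_lt _ (by omega)
    set m := (a.val + k) % (2 * n) with hm
    have hmpar : m % 2 = (a.val + k) % 2 := Nat.mod_mod_of_dvd _ ⟨n, rfl⟩
    have hnext : (a.val + (k + 1)) % (2 * n) = (m + 1) % (2 * n) := by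
      rw [show a.val + (k + 1) = (a.val + k) + 1 by omega,
        Nat.add_mod (a.val + k) 1, Nat.mod_eq_of_lt (show 1 < 2 * n by omega), hm]
    rw [show (⟨(a.val + (k + 1)) % (2 * n), Nat.lt_succ_of_lt (Nat.mod_lt _ (by omega))⟩ :
        Fin (2 * n + 1))
        = ⟨(m + 1) % (2 * n), Nat.lt_succ_of_lt (Nat.mod_lt _ (by omega))⟩ from Fin.ext hnext,
      warp_mod_succ n o u hn m hm2]
    rcases Nat.mod_two_eq_zero_or_one k with hk2 | hk2
    · obtain ⟨c1, hc1⟩ : ∃ c1, (o c1).val = m := by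
        refine (hpar m hm2).mpr ?_
        rw [show m % 2 = a.val % 2 by omega]
        exact hOa
      have hstep := warp_step_over n o u hval ⟨m, by omega⟩ hm2 c1 hc1
      simp only [Fin.val_mk] at hstep
      rw [hstep, ih, hk2]
      omega
    · have hno : ¬ ∃ c1, (o c1).val = m := by
        intro hOm
        have h5 := ((hpar m hm2).mp hOm).trans hOa.symm
        omega
      obtain ⟨c1, hc1⟩ : ∃ c1, (u c1).val = m := by
        rcases htot ⟨m, hm2⟩ with h | h
        · exact absurd (by simpa using h) hno
        · simpa using h
      have hstep := warp_step_under n o u hval ⟨m, by omega⟩ hm2 c1 hc1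
      simp only [Fin.val_mk] at hstep
      have h7 : warpingDegree n o u ⟨m + 1, by omega⟩ + 1 = warpingDegree n o u a + 1 := by
        rw [← hstep, ih, hk2]
      rw [show (k + 1) % 2 = 0 by omega]
      simpa using Nat.succ_injective h7
end Chain

/-- Lemma 4.4: in an alternating diagram, a base point located immediately before an
over-passage realizes the minimal warping degree. -/
theorem warpingDegree_min_at_before_over (n : ℕ) (hn : 1 ≤ n)
    (o u : Fin n → Fin (2 * n))
    (hval : Function.Injective (Sum.elim o u : Fin n ⊕ Fin n → Fin (2 * n)))
    (halt : IsAlternating n o u)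
    (a : Fin (2 * n + 1)) (c : Fin n) (hc : (o c).val = a.val) :
    ∀ b : Fin (2 * n + 1), warpingDegree n o u a ≤ warpingDegree n o u b := by
  intro b
  have ha : a.val < 2 * n := hc ▸ (o c).isLt
  have hb := b.isLt
  have h1 := warp_chain n o u hval hn halt a c hc (b.val + 2 * n - a.val)
  have hkey : (a.val + (b.val + 2 * n - a.val)) % (2 * n) = b.val % (2 * n) := by
    rw [show a.val + (b.val + 2 * n - a.val) = b.val + 2 * n by omega, Nat.add_mod_right]
  rcases Nat.lt_or_ge b.val (2 * n) with h | h
  · rw [show (⟨(a.val + (b.val + 2 * n - a.val)) % (2 * n),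
          Nat.lt_succ_of_lt (Nat.mod_lt _ (by omega))⟩ : Fin (2 * n + 1)) = b
        from Fin.ext (by simp only [Fin.val_mk]; rw [hkey, Nat.mod_eq_of_lt h])] at h1
    omega
  · have hb2 : b.val = 2 * n := by omega
    rw [show (⟨(a.val + (b.val + 2 * n - a.val)) % (2 * n),
          Nat.lt_succ_of_lt (Nat.mod_lt _ (by omega))⟩ : Fin (2 * n + 1)) = ⟨0, by omega⟩
        from Fin.ext (by simp only [Fin.val_mk]; rw [hkey, hb2, Nat.mod_self])] at h1
    have hw := warp_wrap n o u hn
    rw [show b = ⟨2 * n, by omega⟩ from Fin.ext hb2]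
    omega
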